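/- Let N = μ·X₀ where μ ∈ ℂ, |μ| = 1, and X₀ ∈ ℝⁿ ⊂ ℂⁿ is a unit vector with all coordinates real (i.e. N is 𝔄-principal). Let T = {Z ∈ ℂⁿ : g(Z,N) = 0}, 𝒞 = {Z ∈ ℂⁿ : ⟨Z,N⟩ = 0} (complex inner product), and 𝒬 = {Z ∈ ℂⁿ : λ·Z ∈ T and λ·conj(Z) ∈ T for every λ ∈ ℂ with |λ| = 1} (the maximal 𝔄-invariant subspace of T). Then 𝒬 = 𝒞. -/

import Mathlib

noncomputable section

/-- The real inner product `g(X,Y) = Re⟨X,Y⟩` on `ℂⁿ`. -/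
def gQ {n : ℕ} (X Y : EuclideanSpace ℂ (Fin n)) : ℝ :=
  (inner ℂ X Y : ℂ).re

/-- The Kähler structure `J` (multiplication by `i`). -/
def JQ {n : ℕ} (X : EuclideanSpace ℂ (Fin n)) : EuclideanSpace ℂ (Fin n) :=
  Complex.I • X

/-- The complex conjugation `A` (coordinatewise conjugation). -/
def AQ {n : ℕ} (X : EuclideanSpace ℂ (Fin n)) : EuclideanSpace ℂ (Fin n) :=
  WithLp.toLp 2 (fun j => (starRingEnd ℂ) (X j))

/-- The curvature tensor of the complex quadric in the linear model. -/
def Rbar {n : ℕ} (X Y Z : EuclideanSpace ℂ (Fin n)) : EuclideanSpace ℂ (Fin n) :=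
  gQ Y Z • X - gQ X Z • Y + gQ (JQ Y) Z • JQ X - gQ (JQ X) Z • JQ Y
    - ((2 : ℝ) * gQ (JQ X) Y) • JQ Z
    + gQ (AQ Y) Z • AQ X - gQ (AQ X) Z • AQ Y
    + gQ (JQ (AQ Y)) Z • JQ (AQ X) - gQ (JQ (AQ X)) Z • JQ (AQ Y)

/-- The Jacobi operator `R_W = R̄(·, W) W`. -/
def jacobiOp {n : ℕ} (W X : EuclideanSpace ℂ (Fin n)) : EuclideanSpace ℂ (Fin n) :=
  Rbar X W W

/-! A complex line `ℂ·Z` lies in the real hyperplane `N^⊥_g` exactly when `Z` is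
Hermitian-orthogonal to `N`; the real structure `A` preserves Hermitian orthogonality to
an `𝔄`-principal vector, since it fixes the real part `X₀` and is antiunitary. -/

theorem inner_eq_zero_iff_forall_re_inner_smul_eq_zero {E : Type*} [NormedAddCommGroup E]
    [InnerProductSpace ℂ E] (Z N : E) :
    inner ℂ Z N = 0 ↔ ∀ lam : ℂ, ‖lam‖ = 1 → (inner ℂ (lam • Z) N).re = 0 := by
  refine ⟨fun h lam _ => by rw [inner_smul_left, h, mul_zero, Complex.zero_re], fun h => ?_⟩
  have h_re := h 1 (by simp)
  have h_im := h Complex.I (by simp)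
  simp only [one_smul, inner_smul_left, Complex.conj_I, Complex.mul_re, Complex.neg_re,
    Complex.I_re, Complex.neg_im, Complex.I_im] at h_re h_im
  exact Complex.ext (by simpa using h_re) (by simpa using h_im)

theorem inner_AQ_AQ {n : ℕ} (X Y : EuclideanSpace ℂ (Fin n)) :
    inner ℂ (AQ X) (AQ Y) = starRingEnd ℂ (inner ℂ X Y) := by
  simp only [AQ, PiLp.inner_apply, RCLike.inner_apply, map_sum, map_mul, Complex.conj_conj]

theorem AQ_eq_self {n : ℕ} {X : EuclideanSpace ℂ (Fin n)} (hX : ∀ j, (X j).im = 0) :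
    AQ X = X := by
  ext j
  exact Complex.conj_eq_iff_im.mpr (hX j)

theorem inner_AQ_smul_eq_zero_of_inner_smul_eq_zero {n : ℕ} {μ : ℂ}
    {X₀ : EuclideanSpace ℂ (Fin n)} (hX₀ : ∀ j, (X₀ j).im = 0) {Z : EuclideanSpace ℂ (Fin n)}
    (hZ : inner ℂ Z (μ • X₀) = 0) : inner ℂ (AQ Z) (μ • X₀) = 0 := by
  have h_inner_AQ : inner ℂ (AQ Z) X₀ = starRingEnd ℂ (inner ℂ Z X₀) := by
    rw [← inner_AQ_AQ, AQ_eq_self hX₀]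
  rw [inner_smul_right] at hZ ⊢
  rcases mul_eq_zero.mp hZ with hμ | hZX₀
  · rw [hμ, zero_mul]
  · rw [h_inner_AQ, hZX₀, map_zero, mul_zero]

theorem maximal_invariant_subspace_principal_general
    (n : ℕ) (μ : ℂ)
    (X₀ : EuclideanSpace ℂ (Fin n))
    (hXreal : ∀ j, (X₀ j).im = 0)
    (N : EuclideanSpace ℂ (Fin n)) (hN : N = μ • X₀)
    (T C Q : Set (EuclideanSpace ℂ (Fin n)))
    (hT : T = {Z | gQ Z N = 0})
    (hC : C = {Z | (inner ℂ Z N : ℂ) = 0})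
    (hQ : Q = {Z | ∀ lam : ℂ, ‖lam‖ = 1 →
      lam • Z ∈ T ∧ lam • AQ Z ∈ T}) :
    Q = C := by
  subst hN hT hC hQ
  ext Z
  simp only [Set.mem_ofPred_eq, gQ, forall_and]
  rw [← inner_eq_zero_iff_forall_re_inner_smul_eq_zero,
    ← inner_eq_zero_iff_forall_re_inner_smul_eq_zero]
  exact ⟨And.left, fun hZ => ⟨hZ, inner_AQ_smul_eq_zero_of_inner_smul_eq_zero hXreal hZ⟩⟩

/-- For an `𝔄`-principal unit vector `N = μ·X₀` (`|μ| = 1`, `X₀ ∈ ℝⁿ` a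
unit vector with all real coordinates), the maximal `𝔄`-invariant subspace `𝒬` of
the tangent space `T = {Z : g(Z,N) = 0}` coincides with the maximal complex subspace
`𝒞 = {Z : ⟨Z,N⟩ = 0}`. -/
theorem maximal_invariant_subspace_principal
    (n : ℕ) (hn : 2 ≤ n) (μ : ℂ) (hμ : ‖μ‖ = 1)
    (X₀ : EuclideanSpace ℂ (Fin n))
    (hXreal : ∀ j, (X₀ j).im = 0) (hX : ‖X₀‖ = 1)
    (N : EuclideanSpace ℂ (Fin n)) (hN : N = μ • X₀)
    (T C Q : Set (EuclideanSpace ℂ (Fin n)))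
    (hT : T = {Z | gQ Z N = 0})
    (hC : C = {Z | (inner ℂ Z N : ℂ) = 0})
    (hQ : Q = {Z | ∀ lam : ℂ, ‖lam‖ = 1 →
      lam • Z ∈ T ∧ lam • AQ Z ∈ T}) :
    Q = C :=
  maximal_invariant_subspace_principal_general n μ X₀ hXreal N hN T C Q hT hC hQ
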